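/- arXiv:1807.02419 — 2 statements merged into one kernel-verified Lean document; each statement's English description precedes it below -/
import Mathlib

section
/- For every divergence-free mean-zero vector field u in the Sobolev space H^{3/2} on the 3-torus, the functional Φ(u) = (∫ (u·∇)curl^{-1}u · u dx) / ∫|u|² dx (set to 0 when u=0) satisfies |Φ(u)| ≤ c‖u‖_{H^{3/2}} for a constant c independent of u. -/
/-!
In Fourier variables Ψ(u,u,u) is a sum over frequencies k + l + m = 0 in which the gradient
contributes a factor |l| and curl⁻¹ a factor 1/|l| on the same mode, so each term is bounded by
a(k) a(l) a(m), with a the size of û. By symmetry it suffices to sum over |k| ≤ |l|; Cauchy–Schwarz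
with the splitting (a(k) a(m)) · a(l) bounds this by ‖a‖₂² times the square root of
∑_l #{k : |k| ≤ |l|} a(l)², and counting lattice points, #{k : |k| ≤ |l|} ≤ 27 |l|³, turns the
latter into ‖u‖²_{H^{3/2}}. Dividing by ‖u‖₂² gives |Φ(u)| ≤ 81 ‖u‖_{H^{3/2}}.
-/

open MeasureTheory

noncomputable section

abbrev Z3 := Fin 3 → ℤ
abbrev C3 := Fin 3 → ℂ

/-- squared euclidean norm of a frequency vector -/
def knormSq (k : Z3) : ℝ := ∑ i, ((k i : ℝ))^2

def knorm (k : Z3) : ℝ := Real.sqrt (knormSq k)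

/-- squared Sobolev H^s norm via Fourier coefficients -/
def sobNormSq (s : ℝ) (c : Z3 → C3) : ℝ :=
  ∑' k : Z3, (knorm k) ^ (2*s) * (∑ i, ‖c k i‖ ^ 2)

def sobNorm (s : ℝ) (c : Z3 → C3) : ℝ := Real.sqrt (sobNormSq s c)

def MeanZero (c : Z3 → C3) : Prop := c 0 = 0

def DivFree (c : Z3 → C3) : Prop := ∀ k, (∑ i, (k i : ℂ) * c k i) = 0

def kcross (k : Z3) (v : C3) : C3 :=
  ![ (k 1 : ℂ) * v 2 - (k 2 : ℂ) * v 1,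
     (k 2 : ℂ) * v 0 - (k 0 : ℂ) * v 2,
     (k 0 : ℂ) * v 1 - (k 1 : ℂ) * v 0 ]

/-- Fourier coefficients of curl⁻¹ : (curl⁻¹ω)^(k) = i (k × ω̂(k))/|k|² -/
def curlInv (c : Z3 → C3) : Z3 → C3 :=
  fun k => if k = 0 then 0 else (Complex.I / (knormSq k : ℂ)) • kcross k (c k)

/-- Ψ(y₁,y₂,y₃) = ∫_{T³} (y₁,∇)curl⁻¹y₂ · y₃ dx, written via Fourier series:
the product of three Fourier series integrated over T³ picks out frequencies
k + l + m = 0, with the gradient contributing the factor i·l. -/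
def Psi (c1 c2 c3 : Z3 → C3) : ℂ :=
  (2*Real.pi)^3 * ∑' p : Z3 × Z3,
    (∑ i, c1 p.1 i * (Complex.I * ((p.2 i : ℤ) : ℂ))) *
    (∑ i, curlInv c2 p.2 i * c3 (-(p.1 + p.2)) i)

/-- Φ(u) = Ψ(u,u,u)/∫|u|², with ∫_{T³}|u|² = (2π)³ ∑_k |û(k)|².  Φ(0)=0. -/
def Phi (c : Z3 → C3) : ℂ :=
  if sobNormSq 0 c = 0 then 0
  else Psi c c c / (((2*Real.pi)^3 * sobNormSq 0 c : ℝ) : ℂ)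

/-- heat semigroup S(t;·) on Fourier coefficients -/
def heat (t : ℝ) (c : Z3 → C3) : Z3 → C3 :=
  fun k i => c k i * Complex.exp (-(knormSq k) * t)

open scoped ENNReal

theorem ENNReal.tsum_mul_sq_le {ι : Type*} (f g : ι → ℝ≥0∞) :
    (∑' i, f i * g i) ^ 2 ≤ (∑' i, f i ^ 2) * ∑' i, g i ^ 2 := by
  have holder :
      ∑' i, f i * g i ≤ (∑' i, f i ^ 2) ^ (1 / 2 : ℝ) * (∑' i, g i ^ 2) ^ (1 / 2 : ℝ) := by
    rw [ENNReal.tsum_eq_iSup_sum]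
    refine iSup_le fun s =>
      (ENNReal.inner_le_Lp_mul_Lq s f g Real.HolderConjugate.two_two).trans ?_
    simp only [ENNReal.rpow_two]
    gcongr <;> exact ENNReal.sum_le_tsum s
  calc (∑' i, f i * g i) ^ 2
      ≤ ((∑' i, f i ^ 2) ^ (1 / 2 : ℝ) * (∑' i, g i ^ 2) ^ (1 / 2 : ℝ)) ^ 2 := by gcongr
    _ = (∑' i, f i ^ 2) * ∑' i, g i ^ 2 := by
      rw [mul_pow, ← ENNReal.rpow_natCast, ← ENNReal.rpow_natCast, ← ENNReal.rpow_mul,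
        ← ENNReal.rpow_mul]
      norm_num

section Convolution

variable {G : Type*} [AddCommGroup G]

/-- On triples `k + l + m = 0` parametrized by `(k, l)`, this exchanges `l` and `m`. -/
def shearNeg : Equiv.Perm (G × G) :=
  Function.Involutive.toPerm (fun p => (p.1, -(p.1 + p.2)))
    fun p => Prod.ext rfl (by simp)

lemma shearNeg_apply (p : G × G) : shearNeg p = (p.1, -(p.1 + p.2)) := rfl

variable (a : G → ℝ≥0∞) (w : G → ℝ)

lemma tsum_triple_le_three_mul :
    ∑' p : G × G, a p.1 * a p.2 * a (-(p.1 + p.2))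
      ≤ 3 * ∑' p : G × G, if w p.1 ≤ w p.2 then a p.1 * a p.2 * a (-(p.1 + p.2)) else 0 := by
  set F : G × G → ℝ≥0∞ := fun p => if w p.1 ≤ w p.2 then a p.1 * a p.2 * a (-(p.1 + p.2)) else 0
  -- Whichever of `k, l, m` has the largest weight, one of the three copies puts it second.
  have pointwise : ∀ p : G × G,
      a p.1 * a p.2 * a (-(p.1 + p.2)) ≤ F p + F (shearNeg p) + F (Equiv.prodComm G G p) := by
    rintro ⟨k, l⟩
    have hm : -(k + -(k + l)) = l := by abel
    simp only [F, shearNeg_apply, Equiv.prodComm_apply, Prod.swap_prod_mk, hm, add_comm l k]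
    by_cases hkl : w k ≤ w l
    · rw [if_pos hkl]
      exact le_add_right le_self_add
    by_cases hkm : w k ≤ w (-(k + l))
    · rw [if_pos hkm, mul_right_comm]
      exact le_add_right le_add_self
    · rw [if_pos (not_le.1 hkl).le, mul_comm (a k)]
      exact le_add_self
  calc ∑' p, a p.1 * a p.2 * a (-(p.1 + p.2))
      ≤ ∑' p, (F p + F (shearNeg p) + F (Equiv.prodComm G G p)) := ENNReal.tsum_le_tsum pointwise
    _ = 3 * ∑' p, F p := by
      rw [ENNReal.tsum_add, ENNReal.tsum_add, Equiv.tsum_eq, Equiv.tsum_eq]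
      ring

lemma tsum_mul_comp_shearNeg_sq :
    ∑' p : G × G, (a p.1 * a (-(p.1 + p.2))) ^ 2 = (∑' k, a k ^ 2) ^ 2 := by
  calc ∑' p : G × G, (a p.1 * a (-(p.1 + p.2))) ^ 2
      = ∑' p : G × G, (a p.1 * a p.2) ^ 2 :=
        (shearNeg : Equiv.Perm (G × G)).tsum_eq fun p => (a p.1 * a p.2) ^ 2
    _ = (∑' k, a k ^ 2) ^ 2 := by
      simp_rw [mul_pow, ENNReal.tsum_prod', ENNReal.tsum_mul_left, ENNReal.tsum_mul_right, sq]

lemma sq_tsum_triple_restrict_le :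
    (∑' p : G × G, if w p.1 ≤ w p.2 then a p.1 * a p.2 * a (-(p.1 + p.2)) else 0) ^ 2
      ≤ (∑' k, a k ^ 2) ^ 2 * ∑' p : G × G, if w p.1 ≤ w p.2 then a p.2 ^ 2 else 0 := by
  have factor : ∀ p : G × G, (if w p.1 ≤ w p.2 then a p.1 * a p.2 * a (-(p.1 + p.2)) else 0)
      = a p.1 * a (-(p.1 + p.2)) * (if w p.1 ≤ w p.2 then a p.2 else 0) := by
    intro p; split <;> ring
  simp_rw [factor]
  refine (ENNReal.tsum_mul_sq_le _ _).trans_eq ?_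
  rw [tsum_mul_comp_shearNeg_sq]
  congr 2 with p
  split <;> simp

end Convolution

lemma knormSq_nonneg (k : Z3) : 0 ≤ knormSq k :=
  Finset.sum_nonneg fun _ _ => sq_nonneg _

lemma knorm_nonneg (k : Z3) : 0 ≤ knorm k := Real.sqrt_nonneg _

lemma knorm_sq (k : Z3) : knorm k ^ 2 = knormSq k := Real.sq_sqrt (knormSq_nonneg k)

lemma sq_le_knormSq (k : Z3) (i : Fin 3) : (k i : ℝ) ^ 2 ≤ knormSq k :=
  Finset.single_le_sum (f := fun j => (k j : ℝ) ^ 2) (fun _ _ => sq_nonneg _) (Finset.mem_univ i)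

lemma abs_le_knorm (k : Z3) (i : Fin 3) : |(k i : ℝ)| ≤ knorm k :=
  Real.abs_le_sqrt (sq_le_knormSq k i)

lemma norm_intCast_le_knorm (k : Z3) (i : Fin 3) : ‖(k i : ℂ)‖ ≤ knorm k := by
  simpa only [Complex.norm_intCast] using abs_le_knorm k i

lemma one_le_knorm {k : Z3} (hk : k ≠ 0) : 1 ≤ knorm k := by
  obtain ⟨i, hi⟩ := Function.ne_iff.1 hk
  have : (1 : ℝ) ≤ |(k i : ℝ)| := by exact_mod_cast Int.one_le_abs hi
  exact this.trans (abs_le_knorm k i)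

lemma knorm_pos {k : Z3} (hk : k ≠ 0) : 0 < knorm k := one_pos.trans_le (one_le_knorm hk)

lemma tsum_ite_knorm_le_le {R : ℝ} (hR : 1 ≤ R) :
    ∑' k : Z3, (if knorm k ≤ R then (1 : ℝ≥0∞) else 0) ≤ ENNReal.ofReal (27 * R ^ 3) := by
  set N := ⌊R⌋
  set box : Finset Z3 := Fintype.piFinset fun _ => Finset.Icc (-N) N
  have ball_subset_box : ∀ k ∉ box, (if knorm k ≤ R then (1 : ℝ≥0∞) else 0) = 0 := by
    refine fun k hk => if_neg fun hkR => hk (Fintype.mem_piFinset.2 fun i => ?_)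
    have : |(k i : ℝ)| ≤ R := (abs_le_knorm k i).trans hkR
    exact Finset.mem_Icc.2 (abs_le.1 (Int.le_floor.2 (by push_cast; exact this)))
  have card_box : (box.card : ℝ) = (2 * N + 1) ^ 3 := by
    have hN : 0 ≤ N := Int.floor_nonneg.2 (zero_le_one.trans hR)
    simp only [box, Fintype.card_piFinset, Int.card_Icc, Finset.prod_const, Finset.card_univ,
      Fintype.card_fin, Nat.cast_pow]
    have : ((N + 1 - -N).toNat : ℤ) = 2 * N + 1 := by omega
    rw [← Int.cast_natCast, this]
    push_cast
    ring
  calc ∑' k : Z3, (if knorm k ≤ R then (1 : ℝ≥0∞) else 0)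
      = ∑ k ∈ box, (if knorm k ≤ R then (1 : ℝ≥0∞) else 0) := tsum_eq_sum ball_subset_box
    _ ≤ ∑ _k ∈ box, (1 : ℝ≥0∞) := Finset.sum_le_sum fun _ _ => by split <;> simp
    _ = ENNReal.ofReal (box.card : ℝ) := by simp
    _ ≤ ENNReal.ofReal (27 * R ^ 3) := by
      refine ENNReal.ofReal_le_ofReal ?_
      have hN : 0 ≤ 2 * (N : ℝ) + 1 := by
        have := Int.floor_nonneg.2 (zero_le_one.trans hR); positivity
      calc (box.card : ℝ) = (2 * N + 1) ^ 3 := card_box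
        _ ≤ (3 * R) ^ 3 := pow_le_pow_left₀ hN (by linarith [Int.floor_le R]) 3
        _ = 27 * R ^ 3 := by ring

lemma tsum_ite_knorm_le_sq_le (a : Z3 → ℝ≥0∞) (ha : a 0 = 0) :
    ∑' p : Z3 × Z3, (if knorm p.1 ≤ knorm p.2 then a p.2 ^ 2 else 0)
      ≤ 27 * ∑' l, ENNReal.ofReal (knorm l ^ 3) * a l ^ 2 := by
  rw [ENNReal.tsum_prod', ENNReal.tsum_comm, ← ENNReal.tsum_mul_left]
  refine ENNReal.tsum_le_tsum fun l => ?_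
  rcases eq_or_ne l 0 with rfl | hl
  · simp [ha]
  calc ∑' k : Z3, (if knorm k ≤ knorm l then a l ^ 2 else 0)
      = a l ^ 2 * ∑' k : Z3, (if knorm k ≤ knorm l then (1 : ℝ≥0∞) else 0) := by
        rw [← ENNReal.tsum_mul_left]
        congr with k
        split <;> simp
    _ ≤ a l ^ 2 * ENNReal.ofReal (27 * knorm l ^ 3) := by
        gcongr
        exact tsum_ite_knorm_le_le (one_le_knorm hl)
    _ = 27 * (ENNReal.ofReal (knorm l ^ 3) * a l ^ 2) := by
        rw [ENNReal.ofReal_mul (by norm_num), ENNReal.ofReal_ofNat]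
        ring

theorem sq_tsum_triple_le (a : Z3 → ℝ≥0∞) (ha : a 0 = 0) :
    (∑' p : Z3 × Z3, a p.1 * a p.2 * a (-(p.1 + p.2))) ^ 2
      ≤ 243 * (∑' k, a k ^ 2) ^ 2 * ∑' k, ENNReal.ofReal (knorm k ^ 3) * a k ^ 2 := by
  calc (∑' p : Z3 × Z3, a p.1 * a p.2 * a (-(p.1 + p.2))) ^ 2
      ≤ (3 * ∑' p : Z3 × Z3,
          if knorm p.1 ≤ knorm p.2 then a p.1 * a p.2 * a (-(p.1 + p.2)) else 0) ^ 2 := by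
        gcongr
        exact tsum_triple_le_three_mul a knorm
    _ ≤ 9 * ((∑' k, a k ^ 2) ^ 2 *
          ∑' p : Z3 × Z3, if knorm p.1 ≤ knorm p.2 then a p.2 ^ 2 else 0) := by
        rw [mul_pow]
        gcongr
        · norm_num
        · exact sq_tsum_triple_restrict_le a knorm
    _ ≤ 9 * ((∑' k, a k ^ 2) ^ 2 * (27 * ∑' l, ENNReal.ofReal (knorm l ^ 3) * a l ^ 2)) := by
        gcongr
        exact tsum_ite_knorm_le_sq_le a ha
    _ = 243 * (∑' k, a k ^ 2) ^ 2 * ∑' k, ENNReal.ofReal (knorm k ^ 3) * a k ^ 2 := by ring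

def l1Norm (v : C3) : ℝ := ∑ i, ‖v i‖

lemma l1Norm_nonneg (v : C3) : 0 ≤ l1Norm v := Finset.sum_nonneg fun _ _ => norm_nonneg _

lemma norm_sum_mul_le (v w : C3) {M : ℝ} (hw : ∀ i, ‖w i‖ ≤ M) :
    ‖∑ i, v i * w i‖ ≤ l1Norm v * M := by
  calc ‖∑ i, v i * w i‖ ≤ ∑ i, ‖v i‖ * ‖w i‖ := by
        simpa only [norm_mul] using norm_sum_le Finset.univ fun i => v i * w i
    _ ≤ ∑ i, ‖v i‖ * M := by gcongr with i; exact hw i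
    _ = l1Norm v * M := (Finset.sum_mul ..).symm

lemma norm_kcross_apply_le (k : Z3) (v : C3) (i : Fin 3) :
    ‖kcross k v i‖ ≤ knorm k * l1Norm v := by
  have component : ∀ a b c d : Fin 3, b ≠ d →
      ‖(k a : ℂ) * v b - (k c : ℂ) * v d‖ ≤ knorm k * l1Norm v := by
    intro a b c d hbd
    calc ‖(k a : ℂ) * v b - (k c : ℂ) * v d‖ ≤ ‖(k a : ℂ)‖ * ‖v b‖ + ‖(k c : ℂ)‖ * ‖v d‖ := by
          simpa only [norm_mul] using norm_sub_le ((k a : ℂ) * v b) ((k c : ℂ) * v d)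
      _ ≤ knorm k * ∑ j ∈ {b, d}, ‖v j‖ := by
          rw [Finset.sum_pair hbd, mul_add]
          gcongr <;> exact norm_intCast_le_knorm k _
      _ ≤ knorm k * l1Norm v :=
          mul_le_mul_of_nonneg_left
            (Finset.sum_le_univ_sum_of_nonneg fun j => norm_nonneg (v j)) (knorm_nonneg k)
  fin_cases i
  · exact component 1 2 2 1 (by decide)
  · exact component 2 0 0 2 (by decide)
  · exact component 0 1 1 0 (by decide)

lemma norm_curlInv_apply_le (c : Z3 → C3) {l : Z3} (hl : l ≠ 0) (i : Fin 3) :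
    ‖curlInv c l i‖ ≤ l1Norm (c l) / knorm l := by
  have hpos := knorm_pos hl
  calc ‖curlInv c l i‖ = ‖kcross l (c l) i‖ / knorm l ^ 2 := by
        simp [curlInv, hl, ← knorm_sq, div_mul_eq_mul_div]
    _ ≤ knorm l * l1Norm (c l) / knorm l ^ 2 := by gcongr; exact norm_kcross_apply_le l (c l) i
    _ = l1Norm (c l) / knorm l := by field_simp

def psiTerm (c1 c2 c3 : Z3 → C3) (p : Z3 × Z3) : ℂ :=
  (∑ i, c1 p.1 i * (Complex.I * ((p.2 i : ℤ) : ℂ))) *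
    (∑ i, curlInv c2 p.2 i * c3 (-(p.1 + p.2)) i)

lemma Psi_eq_tsum_psiTerm (c1 c2 c3 : Z3 → C3) :
    Psi c1 c2 c3 = (2 * Real.pi) ^ 3 * ∑' p, psiTerm c1 c2 c3 p := rfl

lemma norm_psiTerm_le (c1 c2 c3 : Z3 → C3) (p : Z3 × Z3) :
    ‖psiTerm c1 c2 c3 p‖
      ≤ l1Norm (c1 p.1) * l1Norm (c2 p.2) * l1Norm (c3 (-(p.1 + p.2))) := by
  obtain ⟨k, l⟩ := p
  rcases eq_or_ne l 0 with rfl | hl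
  · simp only [psiTerm, Pi.zero_apply, Int.cast_zero, mul_zero, Finset.sum_const_zero, zero_mul,
      norm_zero]
    exact mul_nonneg (mul_nonneg (l1Norm_nonneg _) (l1Norm_nonneg _)) (l1Norm_nonneg _)
  have gradient : ‖∑ i, c1 k i * (Complex.I * ((l i : ℤ) : ℂ))‖ ≤ l1Norm (c1 k) * knorm l :=
    norm_sum_mul_le _ _ fun i => by simpa using norm_intCast_le_knorm l i
  have potential : ‖∑ i, curlInv c2 l i * c3 (-(k + l)) i‖
      ≤ l1Norm (c3 (-(k + l))) * (l1Norm (c2 l) / knorm l) := by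
    simp_rw [mul_comm (curlInv c2 l _)]
    exact norm_sum_mul_le _ _ (norm_curlInv_apply_le c2 hl)
  have := l1Norm_nonneg (c1 k)
  have := knorm_pos hl
  calc ‖psiTerm c1 c2 c3 (k, l)‖
      ≤ (l1Norm (c1 k) * knorm l) * (l1Norm (c3 (-(k + l))) * (l1Norm (c2 l) / knorm l)) := by
        rw [psiTerm, norm_mul]
        exact mul_le_mul gradient potential (norm_nonneg _) (by positivity)
    _ = l1Norm (c1 k) * l1Norm (c2 l) * l1Norm (c3 (-(k + l))) := by field_simp

lemma summable_sobolev_of_le {s t : ℝ} (hst : s ≤ t) {u : Z3 → C3} (hu : MeanZero u)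
    (ht : Summable fun k => knorm k ^ (2 * t) * ∑ i, ‖u k i‖ ^ 2) :
    Summable fun k => knorm k ^ (2 * s) * ∑ i, ‖u k i‖ ^ 2 := by
  refine ht.of_nonneg_of_le (fun k => by positivity [knorm_nonneg k]) fun k => ?_
  rcases eq_or_ne k 0 with rfl | hk
  · simp [show u 0 = 0 from hu]
  gcongr
  exact one_le_knorm hk

lemma tsum_weight_mul_l1Norm_sq_le (s : ℝ) (u : Z3 → C3)
    (hs : Summable fun k => knorm k ^ (2 * s) * ∑ i, ‖u k i‖ ^ 2) :
    ∑' k, ENNReal.ofReal (knorm k ^ (2 * s)) * ENNReal.ofReal (l1Norm (u k)) ^ 2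
      ≤ ENNReal.ofReal (3 * sobNormSq s u) := by
  have hw : ∀ k, 0 ≤ knorm k ^ (2 * s) := fun k => Real.rpow_nonneg (knorm_nonneg k) _
  rw [sobNormSq, ← tsum_mul_left,
    ENNReal.ofReal_tsum_of_nonneg (fun k => by positivity [hw k]) (hs.mul_left 3)]
  refine ENNReal.tsum_le_tsum fun k => ?_
  rw [← ENNReal.ofReal_pow (l1Norm_nonneg _), ← ENNReal.ofReal_mul (hw k)]
  refine ENNReal.ofReal_le_ofReal ?_
  have : l1Norm (u k) ^ 2 ≤ 3 * ∑ i, ‖u k i‖ ^ 2 := by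
    simpa [l1Norm] using sq_sum_le_card_mul_sum_sq (s := Finset.univ) (f := fun i => ‖u k i‖)
  nlinarith [hw k]

lemma norm_Psi_le {u : Z3 → C3} (hu : MeanZero u)
    (hs : Summable fun k => knorm k ^ (2 * (3 / 2 : ℝ)) * ∑ i, ‖u k i‖ ^ 2) :
    ‖Psi u u u‖ ≤ (2 * Real.pi) ^ 3 * (81 * (sobNormSq 0 u * sobNorm (3 / 2) u)) := by
  set a : Z3 → ℝ≥0∞ := fun k => ENNReal.ofReal (l1Norm (u k))
  set D := sobNormSq 0 u
  set N := sobNormSq (3 / 2) u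
  have hD : 0 ≤ D := tsum_nonneg fun k => by positivity [knorm_nonneg k]
  have hN : 0 ≤ N := tsum_nonneg fun k => by positivity [knorm_nonneg k]
  have hS : 0 ≤ sobNorm (3 / 2) u := Real.sqrt_nonneg _
  have hS2 : sobNorm (3 / 2) u ^ 2 = N := Real.sq_sqrt hN
  have energy : ∑' k, a k ^ 2 ≤ ENNReal.ofReal (3 * D) := by
    simpa using tsum_weight_mul_l1Norm_sq_le 0 u (summable_sobolev_of_le (by norm_num) hu hs)
  have enstrophy : ∑' k, ENNReal.ofReal (knorm k ^ 3) * a k ^ 2 ≤ ENNReal.ofReal (3 * N) := by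
    have h3 : (2 * (3 / 2 : ℝ)) = ((3 : ℕ) : ℝ) := by norm_num
    simpa only [h3, Real.rpow_natCast] using tsum_weight_mul_l1Norm_sq_le (3 / 2) u hs
  have triple : ∑' p : Z3 × Z3, a p.1 * a p.2 * a (-(p.1 + p.2))
      ≤ ENNReal.ofReal (81 * (D * sobNorm (3 / 2) u)) := by
    refine (ENNReal.pow_le_pow_left_iff two_ne_zero).1 ?_
    refine (sq_tsum_triple_le a (by simp [a, show u 0 = 0 from hu, l1Norm])).trans ?_
    calc 243 * (∑' k, a k ^ 2) ^ 2 * ∑' k, ENNReal.ofReal (knorm k ^ 3) * a k ^ 2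
        ≤ 243 * ENNReal.ofReal (3 * D) ^ 2 * ENNReal.ofReal (3 * N) := by gcongr
      _ = ENNReal.ofReal (81 * (D * sobNorm (3 / 2) u)) ^ 2 := by
        rw [← ENNReal.ofReal_pow (by positivity), ← ENNReal.ofReal_pow (by positivity),
          ← ENNReal.ofReal_ofNat 243, ← ENNReal.ofReal_mul (by norm_num),
          ← ENNReal.ofReal_mul (by positivity)]
        congr 1
        linear_combination (-6561 * D ^ 2) * hS2
  have terms : ∑' p, ‖psiTerm u u u p‖ₑ ≤ ENNReal.ofReal (81 * (D * sobNorm (3 / 2) u)) := by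
    refine le_trans (ENNReal.tsum_le_tsum fun p => ?_) triple
    rw [← ofReal_norm, ← ENNReal.ofReal_mul (l1Norm_nonneg _),
      ← ENNReal.ofReal_mul (mul_nonneg (l1Norm_nonneg _) (l1Norm_nonneg _))]
    exact ENNReal.ofReal_le_ofReal (norm_psiTerm_le u u u p)
  have sum_bound : ‖∑' p, psiTerm u u u p‖ ≤ 81 * (D * sobNorm (3 / 2) u) := by
    rw [← ENNReal.ofReal_le_ofReal_iff (by positivity), ofReal_norm]
    exact enorm_tsum_le_tsum_enorm.trans terms
  rw [Psi_eq_tsum_psiTerm, norm_mul]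
  gcongr
  simp [abs_of_pos Real.pi_pos]

/-- |Φ(u)| ≤ c ‖u‖_{H^{3/2}} for all divergence-free mean-zero u ∈ V^{3/2}. -/
theorem stmt0 :
    ∃ c > (0:ℝ), ∀ u : Z3 → C3, DivFree u → MeanZero u →
      Summable (fun k : Z3 => (knorm k) ^ (2*(3/2:ℝ)) * (∑ i, ‖u k i‖ ^ 2)) →
      ‖Phi u‖ ≤ c * sobNorm (3/2) u := by
  refine ⟨81, by norm_num, fun u _ hu hs => ?_⟩
  unfold Phi
  split_ifs with hD
  · rw [norm_zero]
    exact mul_nonneg (by norm_num) (Real.sqrt_nonneg _)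
  have hDpos : 0 < sobNormSq 0 u :=
    (tsum_nonneg fun k => by positivity [knorm_nonneg k]).lt_of_ne' hD
  rw [norm_div, Complex.norm_real, Real.norm_of_nonneg (by positivity), div_le_iff₀ (by positivity)]
  calc ‖Psi u u u‖ ≤ (2 * Real.pi) ^ 3 * (81 * (sobNormSq 0 u * sobNorm (3 / 2) u)) :=
        norm_Psi_le hu hs
    _ = 81 * sobNorm (3 / 2) u * ((2 * Real.pi) ^ 3 * sobNormSq 0 u) := by ring
end
end

section
/- Suppose for all t ∈ [0,T] the function y(t) = ‖y(t,·;v)‖ satisfies y(t) > 0 and d/dt(1/y) − (1/y) ≥ β e^{-15t}, with y(0) = ‖v‖. Then y(t) ≤ ‖v‖ e^{-t} / (1 + (β/16)‖v‖(1 − e^{-16t})) for all t ∈ (0,T). -/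
/-!
With `z = 1 / y` the hypothesis reads `z' - z ≥ β e^{-15t}`. Multiplying by the integrating
factor `e^{-t}` gives `(e^{-t} z)' ≥ β e^{-16t} = (β/16 (1 - e^{-16t}))'`, so
`e^{-t} z(t) - β/16 (1 - e^{-16t})` is nondecreasing and hence at least its value `1/‖v‖` at `0`.
Inverting this lower bound for `z` is the claimed upper bound for `y`.
-/

open Real Set

theorem hasDerivAt_exp_neg_mul {z : ℝ → ℝ} {z' s : ℝ} (hz : HasDerivAt z z' s) :
    HasDerivAt (fun u => exp (-u) * z u) (exp (-s) * (z' - z s)) s := by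
  have hexp : HasDerivAt (fun u => exp (-u)) (-exp (-s)) s := by
    simpa using (hasDerivAt_neg' (x := s)).exp
  exact (hexp.mul hz).congr_deriv (by ring)

theorem hasDerivAt_one_sub_exp_neg_mul {c : ℝ} (hc : c ≠ 0) (β s : ℝ) :
    HasDerivAt (fun u => β / c * (1 - exp (-c * u))) (β * exp (-c * s)) s := by
  have hexp : HasDerivAt (fun u => exp (-c * u)) (exp (-c * s) * -c) s := by
    simpa using ((hasDerivAt_id s).const_mul (-c)).exp
  exact (((hasDerivAt_const s 1).sub hexp).const_mul (β / c)).congr_deriv (by field_simp; ring)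

theorem add_le_exp_neg_mul_of_deriv_sub_ge {z z' : ℝ → ℝ} {T β c : ℝ} (hc : c ≠ 0)
    (hz : ∀ t ∈ Icc 0 T, HasDerivAt z (z' t) t)
    (hineq : ∀ t ∈ Icc 0 T, β * exp (-(c - 1) * t) ≤ z' t - z t) :
    ∀ t ∈ Icc 0 T, z 0 + β / c * (1 - exp (-c * t)) ≤ exp (-t) * z t := by
  set F : ℝ → ℝ := fun u => exp (-u) * z u - β / c * (1 - exp (-c * u))
  have hF : ∀ t ∈ Icc 0 T, HasDerivAt F (exp (-t) * (z' t - z t) - β * exp (-c * t)) t :=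
    fun t ht => (hasDerivAt_exp_neg_mul (hz t ht)).sub (hasDerivAt_one_sub_exp_neg_mul hc β t)
  have hF_nonneg : ∀ t ∈ Icc 0 T, 0 ≤ exp (-t) * (z' t - z t) - β * exp (-c * t) := by
    intro t ht
    have hfactor : exp (-c * t) = exp (-t) * exp (-(c - 1) * t) := by
      rw [← exp_add]; ring_nf
    rw [hfactor, ← mul_assoc, mul_comm β, mul_assoc, ← mul_sub]
    exact mul_nonneg (exp_pos _).le (sub_nonneg.mpr (hineq t ht))
  have hmono : MonotoneOn F (Icc 0 T) := by
    refine monotoneOn_of_hasDerivWithinAt_nonneg (convex_Icc 0 T)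
      (f' := fun t => exp (-t) * (z' t - z t) - β * exp (-c * t))
      (fun t ht => (hF t ht).continuousAt.continuousWithinAt) (fun t ht => ?_) (fun t ht => ?_)
    all_goals rw [interior_Icc] at ht
    · exact (hF t (Ioo_subset_Icc_self ht)).hasDerivWithinAt
    · exact hF_nonneg t (Ioo_subset_Icc_self ht)
  intro t ht
  have h0 : (0 : ℝ) ∈ Icc 0 T := ⟨le_rfl, ht.1.trans ht.2⟩
  have hFt := hmono h0 ht ht.1
  simp only [F, neg_zero, exp_zero, one_mul, mul_zero, sub_self, sub_zero] at hFt
  linarith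

theorem stmt13_general (T β nv : ℝ) (hβ : 0 < β) (hnv : 0 < nv)
    (y g : ℝ → ℝ)
    (hpos : ∀ t ∈ Set.Icc (0:ℝ) T, 0 < y t)
    (hd : ∀ t ∈ Set.Icc (0:ℝ) T, HasDerivAt (fun s => 1 / y s) (g t) t)
    (hineq : ∀ t ∈ Set.Icc (0:ℝ) T, g t - 1 / y t ≥ β * Real.exp (-15*t))
    (hy0 : y 0 = nv) :
    ∀ t ∈ Set.Ioo (0:ℝ) T,
      y t ≤ nv * Real.exp (-t) / (1 + β/16 * nv * (1 - Real.exp (-16*t))) := by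
  intro t ht
  have ht' : t ∈ Icc 0 T := Ioo_subset_Icc_self ht
  have hineq' : ∀ s ∈ Icc 0 T, β * exp (-(16 - 1) * s) ≤ g s - 1 / y s := fun s hs => by
    simpa [show (16 : ℝ) - 1 = 15 by norm_num] using hineq s hs
  have hlower := add_le_exp_neg_mul_of_deriv_sub_ge (by norm_num) hd hineq' t ht'
  simp only [hy0] at hlower
  have hyt := hpos t ht'
  have hdecay : 0 ≤ 1 - exp (-16 * t) := sub_nonneg.mpr (exp_le_one_iff.mpr (by linarith [ht.1]))
  have hden : 0 < 1 + β / 16 * nv * (1 - exp (-16 * t)) :=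
    add_pos_of_pos_of_nonneg one_pos (mul_nonneg (by positivity) hdecay)
  rw [le_div_iff₀ hden]
  calc y t * (1 + β / 16 * nv * (1 - exp (-16 * t)))
      = nv * y t * (1 / nv + β / 16 * (1 - exp (-16 * t))) := by field_simp
    _ ≤ nv * y t * (exp (-t) * (1 / y t)) := by gcongr
    _ = nv * exp (-t) := by field_simp

/-- if y > 0, y(0) = ‖v‖ and (1/y)'(t) − 1/y(t) ≥ βe^{-15t} on [0,T], then
y(t) ≤ ‖v‖e^{-t}/(1 + (β/16)‖v‖(1 − e^{-16t})) on (0,T). -/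
theorem stmt13 (T β nv : ℝ) (hT : 0 < T) (hβ : 0 < β) (hnv : 0 < nv)
    (y g : ℝ → ℝ)
    (hpos : ∀ t ∈ Set.Icc (0:ℝ) T, 0 < y t)
    (hd : ∀ t ∈ Set.Icc (0:ℝ) T, HasDerivAt (fun s => 1 / y s) (g t) t)
    (hineq : ∀ t ∈ Set.Icc (0:ℝ) T, g t - 1 / y t ≥ β * Real.exp (-15*t))
    (hy0 : y 0 = nv) :
    ∀ t ∈ Set.Ioo (0:ℝ) T,
      y t ≤ nv * Real.exp (-t) / (1 + β/16 * nv * (1 - Real.exp (-16*t))) :=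
  stmt13_general T β nv hβ hnv y g hpos hd hineq hy0
end
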